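/- arXiv:1104.3727 — 2 statements merged into one kernel-verified Lean document; each statement's English description precedes it below -/
import Mathlib

section
/- Let C be a binary doubly even self-dual code of length 40 and, for each w, let A_w denote the number of codewords of C of weight w. Then A₈ = 285 + 24·A₄, A₁₂ = 21280 + 92·A₄, A₁₆ = 239970 − 600·A₄, and A₂₀ = 525504 + 966·A₄. -/
/-!
Summing the character `(-1)^(y ⬝ᵥ c)` over `c ∈ C`, `y ∈ D` in both orders gives
`|C| · |D ∩ C^⊥| = |D| · |C ∩ D^⊥|` for any two codes. Taking for `D` the vectors supported on a
`t`-set `T` and summing over all such `T` yields the Pless power moments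
`2^t ∑_{c ∈ C} (n - wt c choose t) = |C| ∑_{y ∈ C^⊥, wt y ≤ t} (n - wt y choose t - wt y)`.
A self-dual code of length 40 has `2^20` words and contains the all-ones vector (as
`1 ⬝ᵥ c = c ⬝ᵥ c = 0`), so `A_{40-w} = A_w`. If it is doubly even, the only unknowns are
`A_4, A_8, …, A_20`, and the moments for `t = 0, 2, 4, 6` express `A_8, …, A_20` in terms of `A_4`.
-/

open Finset

/-- Hamming weight of a binary vector: number of nonzero coordinates. -/
def wt {n : ℕ} (x : Fin n → ZMod 2) : ℕ := (Finset.univ.filter fun i => x i ≠ 0).card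

/-- The dual code with respect to the standard inner product. -/
def dualCode {n : ℕ} (C : Submodule (ZMod 2) (Fin n → ZMod 2)) :
    Submodule (ZMod 2) (Fin n → ZMod 2) where
  carrier := {x | ∀ y ∈ C, ∑ i, x i * y i = 0}
  add_mem' := by
    intro a b ha hb y hy
    simp only [Set.mem_setOf_eq] at *
    simp [Pi.add_apply, add_mul, Finset.sum_add_distrib, ha y hy, hb y hy]
  zero_mem' := by intro y hy; simp
  smul_mem' := by
    intro c a ha y hy
    simp only [Set.mem_setOf_eq] at *
    simp [Pi.smul_apply, smul_eq_mul, mul_assoc, ← Finset.mul_sum, ha y hy]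

/-- A code is self-dual if it equals its dual code. -/
def isSelfDual {n : ℕ} (C : Submodule (ZMod 2) (Fin n → ZMod 2)) : Prop := dualCode C = C

/-- A code is doubly even if every codeword has weight divisible by 4. -/
def isDoublyEven {n : ℕ} (C : Submodule (ZMod 2) (Fin n → ZMod 2)) : Prop :=
  ∀ x ∈ C, 4 ∣ wt x

/-- Minimum weight of a code: the smallest weight of a nonzero codeword. -/
noncomputable def minWt {n : ℕ} (C : Submodule (ZMod 2) (Fin n → ZMod 2)) : ℕ :=
  sInf {w | ∃ x ∈ C, x ≠ 0 ∧ wt x = w}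

/-- The linear map on `Fin n → ZMod 2` given by permuting coordinates. -/
def permMap {n : ℕ} (σ : Equiv.Perm (Fin n)) :
    (Fin n → ZMod 2) →ₗ[ZMod 2] (Fin n → ZMod 2) :=
  LinearMap.funLeft (ZMod 2) (ZMod 2) σ

/-- Equivalence of codes: one is obtained from the other by permuting coordinates. -/
def codeEquiv {n : ℕ} (C C' : Submodule (ZMod 2) (Fin n → ZMod 2)) : Prop :=
  ∃ σ : Equiv.Perm (Fin n), Submodule.map (permMap σ) C = C'

/-- `numWt C w` is `A_w`, the number of codewords of weight `w` in `C`. -/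
noncomputable def numWt {n : ℕ} (C : Submodule (ZMod 2) (Fin n → ZMod 2)) (w : ℕ) : ℕ :=
  Set.ncard {x ∈ (C : Set (Fin n → ZMod 2)) | wt x = w}

variable {n : ℕ}

noncomputable def codewords (C : Submodule (ZMod 2) (Fin n → ZMod 2)) : Finset (Fin n → ZMod 2) :=
  (C : Set (Fin n → ZMod 2)).toFinite.toFinset

section Codewords

variable {C D : Submodule (ZMod 2) (Fin n → ZMod 2)}

@[simp]
lemma mem_codewords {x : Fin n → ZMod 2} : x ∈ codewords C ↔ x ∈ C :=
  Set.Finite.mem_toFinset _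

lemma mem_dualCode {x : Fin n → ZMod 2} : x ∈ dualCode C ↔ ∀ y ∈ C, x ⬝ᵥ y = 0 :=
  Iff.rfl

lemma codewords_inf : codewords (C ⊓ D) = codewords C ∩ codewords D := by
  ext; simp

lemma numWt_eq_card (w : ℕ) : numWt C w = #{c ∈ codewords C | wt c = w} := by
  rw [numWt, ← Set.ncard_coe_finset, coe_filter]
  simp only [mem_codewords, SetLike.mem_coe]

end Codewords

lemma wt_le (x : Fin n → ZMod 2) : wt x ≤ n :=
  (card_le_univ _).trans_eq (Fintype.card_fin n)

lemma wt_eq_zero_iff {x : Fin n → ZMod 2} : wt x = 0 ↔ x = 0 := by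
  simp [wt, filter_eq_empty_iff, funext_iff]

lemma card_filter_eq_zero (x : Fin n → ZMod 2) : #{i | x i = 0} = n - wt x := by
  have h := card_filter_add_card_filter_not (s := univ) fun i => x i ≠ 0
  simp only [not_not, card_univ, Fintype.card_fin] at h
  rw [wt]
  omega

lemma wt_add_one (x : Fin n → ZMod 2) : wt (x + 1) = n - wt x := by
  have h (a : ZMod 2) : a + 1 ≠ 0 ↔ a = 0 := by decide +revert
  simp only [wt, Pi.add_apply, Pi.one_apply, h, card_filter_eq_zero]

def signChar : AddChar (ZMod 2) ℤ where
  toFun a := if a = 0 then 1 else -1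
  map_zero_eq_one' := rfl
  map_add_eq_mul' := by decide

lemma signChar_eq_one_iff {a : ZMod 2} : signChar a = 1 ↔ a = 0 := by
  decide +revert

lemma sum_signChar_dotProduct (C : Submodule (ZMod 2) (Fin n → ZMod 2)) (y : Fin n → ZMod 2) :
    ∑ c ∈ codewords C, signChar (y ⬝ᵥ c) =
      if y ∈ codewords (dualCode C) then (#(codewords C) : ℤ) else 0 := by
  classical
  split_ifs with hy
  · rw [mem_codewords, mem_dualCode] at hy
    rw [sum_congr rfl fun c hc => by rw [hy c (mem_codewords.1 hc), AddChar.map_zero_eq_one]]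
    simp
  · obtain ⟨c₀, hc₀, hyc₀⟩ : ∃ c ∈ C, y ⬝ᵥ c ≠ 0 := by simpa [mem_dualCode] using hy
    let ψ : AddChar C ℤ := signChar.compAddMonoidHom
      (AddMonoidHom.mk' (fun c : C => y ⬝ᵥ (c : Fin n → ZMod 2)) fun a b => dotProduct_add _ _ _)
    have hψ : ψ ≠ 1 := AddChar.ne_one_iff.2 ⟨⟨c₀, hc₀⟩, signChar_eq_one_iff.not.2 hyc₀⟩
    rw [sum_subtype _ (fun _ => mem_codewords) fun c => signChar (y ⬝ᵥ c)]
    exact AddChar.sum_eq_zero_of_ne_one hψ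

lemma sum_sum_signChar_dotProduct (C D : Submodule (ZMod 2) (Fin n → ZMod 2)) :
    ∑ y ∈ codewords D, ∑ c ∈ codewords C, signChar (y ⬝ᵥ c) =
      #(codewords C) * #(codewords (D ⊓ dualCode C)) := by
  simp_rw [sum_signChar_dotProduct, sum_ite_mem, sum_const, codewords_inf, nsmul_eq_mul, mul_comm]

theorem card_codewords_mul_card_inf_dualCode (C D : Submodule (ZMod 2) (Fin n → ZMod 2)) :
    #(codewords C) * #(codewords (D ⊓ dualCode C)) =
      #(codewords D) * #(codewords (C ⊓ dualCode D)) := by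
  have h := sum_comm (s := codewords D) (t := codewords C) (f := fun y c => signChar (y ⬝ᵥ c))
  simp only [dotProduct_comm] at h
  rw [sum_sum_signChar_dotProduct, sum_sum_signChar_dotProduct] at h
  exact_mod_cast h

def supportedIn (T : Finset (Fin n)) : Submodule (ZMod 2) (Fin n → ZMod 2) :=
  Submodule.pi (↑Tᶜ) fun _ => ⊥

section SupportedIn

variable {T : Finset (Fin n)}

lemma mem_supportedIn {y : Fin n → ZMod 2} : y ∈ supportedIn T ↔ ∀ i ∉ T, y i = 0 := by
  simp [supportedIn]

lemma card_codewords_supportedIn : #(codewords (supportedIn T)) = 2 ^ #T := by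
  classical
  have h : codewords (supportedIn T) = Fintype.piFinset fun i => if i ∈ T then univ else {0} := by
    ext y
    simp only [mem_codewords, mem_supportedIn, Fintype.mem_piFinset]
    refine forall_congr' fun i => ?_
    split_ifs <;> simp [*]
  rw [h, Fintype.card_piFinset]
  simp [apply_ite, prod_ite_mem]

lemma mem_dualCode_supportedIn {c : Fin n → ZMod 2} :
    c ∈ dualCode (supportedIn T) ↔ ∀ i ∈ T, c i = 0 := by
  classical
  refine ⟨fun h i hi => ?_, fun h y hy => sum_eq_zero fun i _ => ?_⟩
  · have hsingle : Pi.single i 1 ∈ supportedIn T :=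
      mem_supportedIn.2 fun j hj => Pi.single_eq_of_ne (ne_of_mem_of_not_mem hi hj).symm _
    simpa [dotProduct_single] using mem_dualCode.1 h _ hsingle
  · by_cases hi : i ∈ T
    · simp [h i hi]
    · simp [mem_supportedIn.1 hy i hi]

end SupportedIn

theorem two_pow_card_mul_card_vanishing (C : Submodule (ZMod 2) (Fin n → ZMod 2))
    (T : Finset (Fin n)) :
    2 ^ #T * #{c ∈ codewords C | ∀ i ∈ T, c i = 0} =
      #(codewords C) * #{y ∈ codewords (dualCode C) | ∀ i ∉ T, y i = 0} := by
  have h := card_codewords_mul_card_inf_dualCode C (supportedIn T)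
  rw [card_codewords_supportedIn] at h
  convert h.symm using 3 <;> ext <;> simp [mem_supportedIn, mem_dualCode_supportedIn, and_comm]

theorem card_codewords_mul_card_codewords_dualCode (C : Submodule (ZMod 2) (Fin n → ZMod 2)) :
    #(codewords C) * #(codewords (dualCode C)) = 2 ^ n := by
  have h := two_pow_card_mul_card_vanishing C univ
  have hzero : {c ∈ codewords C | ∀ i ∈ univ, c i = 0} = {0} := by
    ext c
    simp only [mem_filter, mem_codewords, mem_univ, true_imp_iff, mem_singleton]
    exact ⟨fun h => funext h.2, by rintro rfl; exact ⟨C.zero_mem, fun _ => rfl⟩⟩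
  rw [hzero, filter_true_of_mem fun _ _ i hi => absurd (mem_univ i) hi] at h
  simpa using h.symm

lemma card_powersetCard_filter_vanishing (c : Fin n → ZMod 2) (t : ℕ) :
    #{T ∈ powersetCard t univ | ∀ i ∈ T, c i = 0} = (n - wt c).choose t := by
  rw [← card_filter_eq_zero, ← card_powersetCard]
  congr 1
  ext T
  simp [mem_powersetCard, subset_iff, and_comm]

lemma card_powersetCard_filter_supportedIn (y : Fin n → ZMod 2) (t : ℕ) :
    #{T ∈ powersetCard t univ | ∀ i ∉ T, y i = 0} =
      if wt y ≤ t then (n - wt y).choose (t - wt y) else 0 := by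
  have hsupp (T : Finset (Fin n)) : (∀ i ∉ T, y i = 0) ↔ ({i | y i ≠ 0} : Finset _) ⊆ T := by
    simp only [subset_iff, mem_filter, mem_univ, true_and]
    exact forall_congr' fun i => not_imp_comm
  simp_rw [hsupp]
  split_ifs with h
  · rw [card_filter_powersetCard_subset _ univ t (subset_univ _) h, card_univ, Fintype.card_fin]
    rfl
  · rw [card_eq_zero, filter_eq_empty_iff]
    exact fun T hT hST => h ((card_le_card hST).trans_eq (mem_powersetCard.1 hT).2)

theorem pless_power_moment (C : Submodule (ZMod 2) (Fin n → ZMod 2)) (t : ℕ) :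
    2 ^ t * ∑ c ∈ codewords C, (n - wt c).choose t =
      #(codewords C) * ∑ y ∈ codewords (dualCode C),
        if wt y ≤ t then (n - wt y).choose (t - wt y) else 0 := by
  have hvanish : ∑ T ∈ powersetCard t univ, #{c ∈ codewords C | ∀ i ∈ T, c i = 0} =
      ∑ c ∈ codewords C, (n - wt c).choose t :=
    (sum_card_bipartiteAbove_eq_sum_card_bipartiteBelow
      fun (T : Finset (Fin n)) (c : Fin n → ZMod 2) => ∀ i ∈ T, c i = 0).trans <|
        sum_congr rfl fun c _ => card_powersetCard_filter_vanishing c t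
  have hsupp : ∑ T ∈ powersetCard t univ, #{y ∈ codewords (dualCode C) | ∀ i ∉ T, y i = 0} =
      ∑ y ∈ codewords (dualCode C), if wt y ≤ t then (n - wt y).choose (t - wt y) else 0 :=
    (sum_card_bipartiteAbove_eq_sum_card_bipartiteBelow
      fun (T : Finset (Fin n)) (y : Fin n → ZMod 2) => ∀ i ∉ T, y i = 0).trans <|
        sum_congr rfl fun y _ => card_powersetCard_filter_supportedIn y t
  rw [← hvanish, ← hsupp, mul_sum, mul_sum]
  exact sum_congr rfl fun T hT => (mem_powersetCard.1 hT).2 ▸ two_pow_card_mul_card_vanishing C T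

section WeightDistribution

variable {C : Submodule (ZMod 2) (Fin n → ZMod 2)}

lemma sum_codewords_comp_wt (f : ℕ → ℕ) :
    ∑ c ∈ codewords C, f (wt c) = ∑ w ∈ range (n + 1), numWt C w * f w := by
  rw [← sum_fiberwise_of_maps_to (g := wt) fun c _ => mem_range.2 (Nat.lt_succ_of_le (wt_le c))]
  refine sum_congr rfl fun w _ => ?_
  rw [sum_congr rfl fun c hc => congrArg f (mem_filter.1 hc).2, sum_const, smul_eq_mul,
    numWt_eq_card]

theorem power_moment_of_isSelfDual (hC : isSelfDual C) (t : ℕ) :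
    2 ^ t * ∑ w ∈ range (n + 1), numWt C w * (n - w).choose t =
      #(codewords C) * ∑ w ∈ range (n + 1),
        numWt C w * if w ≤ t then (n - w).choose (t - w) else 0 := by
  have h := pless_power_moment C t
  rwa [hC, sum_codewords_comp_wt fun w => (n - w).choose t,
    sum_codewords_comp_wt fun w => if w ≤ t then (n - w).choose (t - w) else 0] at h

lemma numWt_zero (C : Submodule (ZMod 2) (Fin n → ZMod 2)) : numWt C 0 = 1 := by
  rw [numWt_eq_card, card_eq_one]
  refine ⟨0, ?_⟩
  ext c
  simp only [mem_filter, mem_codewords, wt_eq_zero_iff, mem_singleton]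
  exact ⟨And.right, by rintro rfl; exact ⟨C.zero_mem, rfl⟩⟩

lemma numWt_eq_zero_of_not_dvd (hC : isDoublyEven C) {w : ℕ} (hw : ¬ 4 ∣ w) : numWt C w = 0 := by
  rw [numWt_eq_card, card_eq_zero, filter_eq_empty_iff]
  rintro c hc rfl
  exact hw (hC c (mem_codewords.1 hc))

lemma one_mem_of_isSelfDual (hC : isSelfDual C) : (1 : Fin n → ZMod 2) ∈ C := by
  rw [← hC]
  intro x hx
  have hxx : x ⬝ᵥ x = 0 := mem_dualCode.1 (hC.symm ▸ hx) x hx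
  have hsq (a : ZMod 2) : a * a = a := by decide +revert
  simpa [dotProduct, hsq] using hxx

lemma numWt_sub_eq (h1 : (1 : Fin n → ZMod 2) ∈ C) {w : ℕ} (hw : w ≤ n) :
    numWt C (n - w) = numWt C w := by
  have hinv (x : Fin n → ZMod 2) : x + 1 + 1 = x := funext fun i => CharTwo.add_cancel_right (x i) 1
  rw [numWt_eq_card, numWt_eq_card]
  refine card_nbij' (· + 1) (· + 1) ?_ ?_ (fun x _ => hinv x) (fun x _ => hinv x) <;>
  · intro x hx
    simp only [mem_coe, mem_filter, mem_codewords, wt_add_one] at hx ⊢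
    exact ⟨C.add_mem hx.1 h1, by omega⟩

end WeightDistribution

theorem weight_distribution_of_power_moments (A : ℕ → ℕ) (h0 : A 0 = 1)
    (hdiv : ∀ w, ¬ 4 ∣ w → A w = 0) (hsym : ∀ w ≤ 40, A (40 - w) = A w)
    (hmom : ∀ t, 2 ^ t * ∑ w ∈ range 41, A w * (40 - w).choose t =
      2 ^ 20 * ∑ w ∈ range 41, A w * if w ≤ t then (40 - w).choose (t - w) else 0) :
    A 8 = 285 + 24 * A 4 ∧ A 12 = 21280 + 92 * A 4 ∧
    (A 16 : ℤ) = 239970 - 600 * (A 4 : ℤ) ∧ A 20 = 525504 + 966 * A 4 := by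
  have h40 : A 40 = 1 := h0 ▸ hsym 0 (by norm_num)
  have h36 := hsym 4 (by norm_num)
  have h32 := hsym 8 (by norm_num)
  have h28 := hsym 12 (by norm_num)
  have h24 := hsym 16 (by norm_num)
  have m0 := hmom 0
  have m2 := hmom 2
  have m4 := hmom 4
  have m6 := hmom 6
  simp only [sum_range_succ, sum_range_zero] at m0 m2 m4 m6
  norm_num [hdiv, h0, h40, h36, h32, h28, h24, Nat.choose_eq_descFactorial_div_factorial,
    Nat.descFactorial_succ] at m0 m2 m4 m6
  omega

/-- The weight enumerator of a doubly even self-dual code of length 40 is determined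
by `A₄`: `A₈ = 285 + 24·A₄`, `A₁₂ = 21280 + 92·A₄`, `A₁₆ = 239970 − 600·A₄` and
`A₂₀ = 525504 + 966·A₄`. -/
theorem weight_enumerator_doubly_even_self_dual_length_40
    (C : Submodule (ZMod 2) (Fin 40 → ZMod 2))
    (hSD : isSelfDual C) (hDE : isDoublyEven C) :
    numWt C 8 = 285 + 24 * numWt C 4 ∧
    numWt C 12 = 21280 + 92 * numWt C 4 ∧
    (numWt C 16 : ℤ) = 239970 - 600 * (numWt C 4 : ℤ) ∧
    numWt C 20 = 525504 + 966 * numWt C 4 := by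
  have hcard : #(codewords C) = 2 ^ 20 := by
    have h := card_codewords_mul_card_codewords_dualCode C
    rw [hSD] at h
    exact Nat.mul_self_inj.1 (h.trans (by norm_num))
  refine weight_distribution_of_power_moments (numWt C) (numWt_zero C)
    (fun _ => numWt_eq_zero_of_not_dvd hDE) (fun _ => numWt_sub_eq (one_mem_of_isSelfDual hSD))
    fun t => ?_
  rw [← hcard]
  exact power_moment_of_isSelfDual hSD t
end

section
/- Let C be a binary doubly even code of length n containing the all-one vector 𝟏. Then the map q_C : C^⊥/C → 𝔽₂ given by q_C(x + C) = (wt(x)/2) mod 2 is well-defined; that is, every x ∈ C^⊥ has even weight, and if x, y ∈ C^⊥ satisfy x + y ∈ C then wt(x)/2 ≡ wt(y)/2 (mod 2). -/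
/-!
Pairing `x ∈ C^⊥` with `𝟏 ∈ C` gives `wt x ≡ 0 (mod 2)`. If moreover `y ∈ C^⊥` and `x + y ∈ C`,
pairing `x` with `x + y` shows that `x · y`, the size of the common support, is even. Then
`wt (x + y) = wt x + wt y - 2 (x · y)` together with `4 ∣ wt (x + y)` makes `wt x / 2 + wt y / 2` even.
-/

open Finset

section

variable {n : ℕ}

theorem wt_eq_sum_val (x : Fin n → ZMod 2) : wt x = ∑ i, (x i).val := by
  rw [wt, card_filter]
  refine sum_congr rfl fun i _ => ?_
  generalize x i = a
  revert a
  decide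

theorem natCast_sum_val_mul_val (x y : Fin n → ZMod 2) :
    ((∑ i, (x i).val * (y i).val : ℕ) : ZMod 2) = ∑ i, x i * y i := by
  push_cast
  simp only [ZMod.natCast_zmod_val]

theorem sum_mul_self_eq_natCast_wt (x : Fin n → ZMod 2) : ∑ i, x i * x i = (wt x : ZMod 2) := by
  rw [← natCast_sum_val_mul_val, wt_eq_sum_val]
  congr 2 with i
  generalize x i = a
  revert a
  decide

theorem wt_add_add_two_mul (x y : Fin n → ZMod 2) :
    wt (x + y) + 2 * ∑ i, (x i).val * (y i).val = wt x + wt y := by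
  simp only [wt_eq_sum_val, mul_sum, ← sum_add_distrib, Pi.add_apply]
  refine sum_congr rfl fun i _ => ?_
  generalize x i = a
  generalize y i = b
  revert a b
  decide

theorem two_dvd_wt_of_mem_dualCode {C : Submodule (ZMod 2) (Fin n → ZMod 2)}
    (hone : (1 : Fin n → ZMod 2) ∈ C) {x : Fin n → ZMod 2} (hx : x ∈ dualCode C) :
    2 ∣ wt x := by
  have h := hx 1 hone
  simp only [Pi.one_apply, mul_one] at h
  rw [← ZMod.natCast_eq_zero_iff, wt_eq_sum_val]
  push_cast
  simpa only [ZMod.natCast_zmod_val] using h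

theorem sum_mul_eq_zero_of_mem_dualCode {C : Submodule (ZMod 2) (Fin n → ZMod 2)}
    {x y : Fin n → ZMod 2} (hx : x ∈ dualCode C) (hxy : x + y ∈ C) (hwt : 2 ∣ wt x) :
    ∑ i, x i * y i = 0 := by
  have h : ∑ i, x i * (x + y) i = 0 := hx _ hxy
  simp only [Pi.add_apply, mul_add, sum_add_distrib, sum_mul_self_eq_natCast_wt,
    (ZMod.natCast_eq_zero_iff _ 2).mpr hwt, zero_add] at h
  exact h

theorem wt_div_two_modEq_of_four_dvd_wt_add {x y : Fin n → ZMod 2} (hx : 2 ∣ wt x)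
    (hy : 2 ∣ wt y) (hxy : ∑ i, x i * y i = 0) (h4 : 4 ∣ wt (x + y)) :
    wt x / 2 ≡ wt y / 2 [MOD 2] := by
  rw [← natCast_sum_val_mul_val, ZMod.natCast_eq_zero_iff] at hxy
  have hadd := wt_add_add_two_mul x y
  obtain ⟨a, ha⟩ := hx
  obtain ⟨b, hb⟩ := hy
  obtain ⟨k, hk⟩ := hxy
  obtain ⟨m, hm⟩ := h4
  rw [ha, hb, Nat.ModEq]
  omega

end

/-- For a binary doubly even code `C` of length `n` containing the all-one vector,
the map `q_C : C^⊥/C → 𝔽₂`, `x + C ↦ (wt x / 2) mod 2`, is well-defined: every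
`x ∈ C^⊥` has even weight, and if `x, y ∈ C^⊥` with `x + y ∈ C` then
`wt x / 2 ≡ wt y / 2 (mod 2)`. -/
theorem qC_well_defined {n : ℕ} (C : Submodule (ZMod 2) (Fin n → ZMod 2))
    (hDE : isDoublyEven C) (hone : (fun _ => 1 : Fin n → ZMod 2) ∈ C) :
    (∀ x ∈ dualCode C, 2 ∣ wt x) ∧
    (∀ x ∈ dualCode C, ∀ y ∈ dualCode C, x + y ∈ C →
      wt x / 2 ≡ wt y / 2 [MOD 2]) := by
  have heven : ∀ x ∈ dualCode C, 2 ∣ wt x := fun x hx => two_dvd_wt_of_mem_dualCode hone hx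
  refine ⟨heven, fun x hx y hy hxy => ?_⟩
  exact wt_div_two_modEq_of_four_dvd_wt_add (heven x hx) (heven y hy)
    (sum_mul_eq_zero_of_mem_dualCode hx hxy (heven x hx)) (hDE _ hxy)
end
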